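/- For all integers 1 ≤ p, q ≤ N, if ṽ ∈ ℝ^q satisfies S(p,q) ṽ = λ ṽ for some λ ∈ ℝ, then the vector v ∈ ℂ^q with entries v_k = exp(iπ(k-1)(p-1)/N) ṽ_k for 1 ≤ k ≤ q satisfies A* A v = λ v. Hence, after normalization, v is a right singular vector of A with singular value √λ. -/

import Mathlib

open Matrix Complex

/-- The twiddle factor `ω = exp(2πi/N)`. -/
noncomputable def omegaN (N : ℕ) : ℂ := Complex.exp (2 * Real.pi * Complex.I / N)

/-- The `p × q` Fourier submatrix `A` with entries `A_{j,k} = ω^{-(j-1)(k-1)}`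
(indices here are 0-based). -/
noncomputable def fourierA (N p q : ℕ) : Matrix (Fin p) (Fin q) ℂ :=
  fun j k => omegaN N ^ (-(((j : ℕ) * (k : ℕ) : ℕ) : ℤ))

/-- The periodic prolate matrix `S(p,q) ∈ ℝ^{q×q}` with entries
`sin(pπ(j-k)/N)/sin(π(j-k)/N)` off the diagonal and `p` on the diagonal. -/
noncomputable def prolateS (N p q : ℕ) : Matrix (Fin q) (Fin q) ℝ :=
  fun j k => if j = k then (p : ℝ)
    else Real.sin ((p : ℝ) * Real.pi * (((j : ℕ) : ℝ) - ((k : ℕ) : ℝ)) / N) /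
         Real.sin (Real.pi * (((j : ℕ) : ℝ) - ((k : ℕ) : ℝ)) / N)

/-
Summing a geometric series, `(A* A)_{kl} = ∑_{j<p} ω^{j(k-l)}` is the Dirichlet kernel
`e^{iπ(p-1)(k-l)/N} S(p,q)_{kl}`. Hence `A* A D = D S(p,q)` for the unitary diagonal matrix
`D = diag(e^{iπk(p-1)/N})`, and `D` carries eigenvectors of `S(p,q)` to eigenvectors of `A* A`.
-/

theorem Matrix.mulVec_mul_eq_smul_of_mul_diagonal_eq {n R : Type*} [Fintype n] [DecidableEq n]
    [CommSemiring R] {M S : Matrix n n R} {u v : n → R} {c : R}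
    (hMS : M * diagonal u = diagonal u * S) (hv : S *ᵥ v = c • v) :
    M *ᵥ (u * v) = c • (u * v) := by
  have hu : u * v = diagonal u *ᵥ v := funext fun k => (mulVec_diagonal u v k).symm
  rw [hu, mulVec_mulVec, hMS, ← mulVec_mulVec, hv, mulVec_smul]

theorem Complex.sin_pi_mul_sub_div_ne_zero {a b N : ℕ} (hab : a ≠ b) (ha : a < N) (hb : b < N) :
    sin (Real.pi * (a - b) / N) ≠ 0 := by
  have hN : (0 : ℝ) < N := Nat.cast_pos.mpr (Nat.zero_lt_of_lt ha)
  have ha' : (a : ℝ) < N := by exact_mod_cast ha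
  have hb' : (b : ℝ) < N := by exact_mod_cast hb
  have hne : Real.pi * (a - b) / N ≠ 0 :=
    div_ne_zero (mul_ne_zero Real.pi_ne_zero (sub_ne_zero.mpr (Nat.cast_injective.ne hab)))
      hN.ne'
  have hsin : Real.sin (Real.pi * (a - b) / N) ≠ 0 := by
    rw [Ne, Real.sin_eq_zero_iff_of_lt_of_lt]
    · exact hne
    · rw [lt_div_iff₀ hN]
      nlinarith [Real.pi_pos, a.cast_nonneg (α := ℝ), b.cast_nonneg (α := ℝ)]
    · rw [div_lt_iff₀ hN]
      nlinarith [Real.pi_pos, b.cast_nonneg (α := ℝ)]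
  exact_mod_cast hsin

theorem Complex.sum_range_exp_mul_sin (x : ℂ) (p : ℕ) :
    (∑ j ∈ Finset.range p, exp (2 * j * x * I)) * sin x = exp ((p - 1) * x * I) * sin (p * x) := by
  induction p with
  | zero => simp
  | succ p ih =>
    have hshift : exp ((p - 1) * x * I) = exp (p * x * I) * exp (-x * I) := by
      rw [← exp_add]; ring_nf
    have hdouble : exp (2 * p * x * I) = exp (p * x * I) * exp (p * x * I) := by
      rw [← exp_add]; ring_nf
    have hsin_succ : exp (-x * I) * sin (p * x) + exp (p * x * I) * sin x = sin (p * x + x) := by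
      rw [sin_add, exp_mul_I, exp_mul_I, cos_neg, sin_neg]
      ring
    rw [Finset.sum_range_succ, add_mul, ih, hshift, hdouble]
    push_cast
    rw [add_sub_cancel_right, add_mul, one_mul, ← hsin_succ]
    ring

theorem star_fourierA_mul_fourierA (N p q : ℕ) (j : Fin p) (k l : Fin q) :
    star (fourierA N p q j k) * fourierA N p q j l =
      exp (2 * (j : ℕ) * (Real.pi * ((k : ℕ) - (l : ℕ)) / N) * I) := by
  simp only [fourierA, omegaN, ← exp_int_mul, star_def, ← exp_conj, ← exp_add, map_mul, map_div₀,
    map_intCast, map_natCast, map_ofNat, conj_I, conj_ofReal]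
  push_cast
  ring_nf

theorem conjTranspose_fourierA_mul_self_apply_mul_sin (N p q : ℕ) (k l : Fin q) :
    ((fourierA N p q)ᴴ * fourierA N p q) k l * sin (Real.pi * ((k : ℕ) - (l : ℕ)) / N) =
      exp ((p - 1) * (Real.pi * ((k : ℕ) - (l : ℕ)) / N) * I) *
        sin (p * (Real.pi * ((k : ℕ) - (l : ℕ)) / N)) := by
  rw [← sum_range_exp_mul_sin, mul_apply]
  simp only [conjTranspose_apply, star_fourierA_mul_fourierA]
  rw [Fin.sum_univ_eq_sum_range (fun j => exp (2 * j * (Real.pi * ((k : ℕ) - (l : ℕ)) / N) * I))]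

noncomputable def prolatePhase (N p q : ℕ) (k : Fin q) : ℂ :=
  exp (Real.pi * I * (k : ℕ) * (p - 1) / N)

theorem conjTranspose_fourierA_mul_self_mul_diagonal (N p q : ℕ) (hqN : q ≤ N) :
    (fourierA N p q)ᴴ * fourierA N p q * diagonal (prolatePhase N p q) =
      diagonal (prolatePhase N p q) * (prolateS N p q).map ofReal := by
  ext k l
  rw [mul_diagonal, diagonal_mul, map_apply]
  rcases eq_or_ne k l with rfl | hkl
  · have hdiag : ((fourierA N p q)ᴴ * fourierA N p q) k k = p := by
      simp only [mul_apply, conjTranspose_apply, star_fourierA_mul_fourierA]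
      simp
    simp [hdiag, prolateS, mul_comm]
  set x : ℂ := Real.pi * ((k : ℕ) - (l : ℕ)) / N with hx
  have hsin : sin x ≠ 0 :=
    sin_pi_mul_sub_div_ne_zero (Fin.val_ne_of_ne hkl) (k.2.trans_le hqN) (l.2.trans_le hqN)
  have hA := eq_div_of_mul_eq hsin (conjTranspose_fourierA_mul_self_apply_mul_sin N p q k l)
  have hS : ((prolateS N p q k l : ℝ) : ℂ) = sin (p * x) / sin x := by
    simp only [prolateS, if_neg hkl, hx]
    push_cast
    ring_nf
  have hphase : prolatePhase N p q k = exp ((p - 1) * x * I) * prolatePhase N p q l := by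
    rw [prolatePhase, prolatePhase, ← exp_add, hx]
    ring_nf
  rw [hA, hS, hphase]
  ring

theorem right_singular_vector_of_prolate_eigenvector_general
    (N p q : ℕ) (hqN : q ≤ N)
    (vt : Fin q → ℝ) (lam : ℝ)
    (hSv : (prolateS N p q).mulVec vt = lam • vt) :
    ((fourierA N p q)ᴴ * fourierA N p q).mulVec
        (fun k : Fin q => Complex.exp ((Real.pi : ℂ) * Complex.I * ((k : ℕ) : ℂ) *
          ((p : ℂ) - 1) / (N : ℂ)) * (vt k : ℂ)) =
      (lam : ℂ) • (fun k : Fin q => Complex.exp ((Real.pi : ℂ) * Complex.I * ((k : ℕ) : ℂ) *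
          ((p : ℂ) - 1) / (N : ℂ)) * (vt k : ℂ)) := by
  have hSvC :
      (prolateS N p q).map ofRealHom *ᵥ (ofRealHom ∘ vt) = (lam : ℂ) • (ofRealHom ∘ vt) := by
    ext k
    rw [← RingHom.map_mulVec, hSv]
    simp
  exact mulVec_mul_eq_smul_of_mul_diagonal_eq
    (conjTranspose_fourierA_mul_self_mul_diagonal N p q hqN) hSvC

/-- If `S(p,q) ṽ = λ ṽ` then the vector `v` with `v_k = exp(iπ(k-1)(p-1)/N) ṽ_k`
satisfies `A* A v = λ v`: it is (after normalization) a right singular vector of `A`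
with singular value `√λ`. -/
theorem right_singular_vector_of_prolate_eigenvector
    (N p q : ℕ) (hN : 0 < N) (hp1 : 1 ≤ p) (hpN : p ≤ N) (hq1 : 1 ≤ q) (hqN : q ≤ N)
    (vt : Fin q → ℝ) (lam : ℝ)
    (hSv : (prolateS N p q).mulVec vt = lam • vt) :
    ((fourierA N p q)ᴴ * fourierA N p q).mulVec
        (fun k : Fin q => Complex.exp ((Real.pi : ℂ) * Complex.I * ((k : ℕ) : ℂ) *
          ((p : ℂ) - 1) / (N : ℂ)) * (vt k : ℂ)) =
      (lam : ℂ) • (fun k : Fin q => Complex.exp ((Real.pi : ℂ) * Complex.I * ((k : ℕ) : ℂ) *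
          ((p : ℂ) - 1) / (N : ℂ)) * (vt k : ℂ)) :=
  right_singular_vector_of_prolate_eigenvector_general N p q hqN vt lam hSv
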